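/- arXiv:1601.00448 — 2 statements merged into one kernel-verified Lean document; each statement's English description precedes it below -/
import Mathlib

section
/- Let p and q be odd coprime positive integers, n a positive odd integer, and N = pqn + 1 (which is even). Then the set {cos(pqkπ/N) : k ∈ ℤ, 0 < k < N, k ≡ n mod 2} equals the set {cos(pkπ/N) : k ∈ ℤ, 0 < k < N, k odd}. -/
/-!
Since `q` is odd and `N ≡ 1 [ZMOD q]`, `q` is invertible modulo `2N`, and an inverse `u` is odd.
The value `cos (m π / N)` only depends on `m` up to sign modulo `2N`, and for even `N` every odd
residue is `± j` for an odd `j` with `0 < j < N`. Hence `k ↦ q k` and `j ↦ u j` match the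
odd indices of the two sets.
-/

open Real

lemma cos_intCast_mul_pi_div_eq_of_modEq {a b M : ℤ} (h : a ≡ b [ZMOD 2 * M]) :
    cos (a * π / M) = cos (b * π / M) := by
  rcases eq_or_ne M 0 with rfl | hM
  · simp
  obtain ⟨t, ht⟩ := h.dvd
  have hbt : (b : ℝ) = a + 2 * M * t := by
    rw [← sub_eq_iff_eq_add']; exact_mod_cast ht
  have hM' : (M : ℝ) ≠ 0 := by exact_mod_cast hM
  rw [hbt, show (a + 2 * M * t : ℝ) * π / M = a * π / M + t * (2 * π) by field_simp,
    cos_add_int_mul_two_pi]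

lemma cos_intCast_mul_pi_div_eq_of_modEq_neg {a b M : ℤ} (h : a ≡ -b [ZMOD 2 * M]) :
    cos (a * π / M) = cos (b * π / M) := by
  rw [cos_intCast_mul_pi_div_eq_of_modEq h, Int.cast_neg, neg_mul, neg_div, cos_neg]

/-- For `M` even, no odd residue modulo `2 M` is `≡ M`, so the representative can be taken
strictly below `M`. -/
lemma Int.exists_odd_lt_modEq_or_modEq_neg {m M : ℤ} (hM : 0 < M) (hMe : Even M) (hm : Odd m) :
    ∃ j, 0 < j ∧ j < M ∧ Odd j ∧ (m ≡ j [ZMOD 2 * M] ∨ m ≡ -j [ZMOD 2 * M]) := by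
  set r := m % (2 * M)
  have hmr : m ≡ r [ZMOD 2 * M] := (Int.mod_modEq m _).symm
  have hr0 : 0 ≤ r := Int.emod_nonneg _ (by omega)
  have hr2M : r < 2 * M := Int.emod_lt_of_pos _ (by omega)
  have hr : r % 2 = 1 := (hmr.of_dvd (dvd_mul_right 2 M)).symm.eq.trans (Int.odd_iff.mp hm)
  obtain ⟨M', rfl⟩ := hMe
  rcases lt_or_ge r (M' + M') with hlt | hge
  · exact ⟨r, by omega, hlt, Int.odd_iff.mpr hr, Or.inl hmr⟩
  · refine ⟨2 * (M' + M') - r, by omega, by omega, Int.odd_iff.mpr (by omega), Or.inr ?_⟩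
    exact hmr.trans (Int.modEq_iff_dvd.mpr ⟨-1, by ring⟩)

lemma exists_odd_lt_cos_eq (a : ℤ) {m M : ℤ} (hM : 0 < M) (hMe : Even M) (hm : Odd m) :
    ∃ j, 0 < j ∧ j < M ∧ Odd j ∧ cos (a * m * π / M) = cos (a * j * π / M) := by
  obtain ⟨j, hj0, hjM, hj, hmj⟩ := Int.exists_odd_lt_modEq_or_modEq_neg hM hMe hm
  refine ⟨j, hj0, hjM, hj, ?_⟩
  rcases hmj with hmj | hmj
  · exact_mod_cast cos_intCast_mul_pi_div_eq_of_modEq (hmj.mul_left a)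
  · have := cos_intCast_mul_pi_div_eq_of_modEq_neg (b := a * j) (by simpa using hmj.mul_left a)
    exact_mod_cast this

lemma Int.exists_odd_mul_modEq_one {q M : ℤ} (hq : Odd q) (hqM : IsCoprime q M) :
    ∃ u, Odd u ∧ q * u ≡ 1 [ZMOD 2 * M] := by
  obtain ⟨u, v, huv⟩ := (Int.isCoprime_two_right.mpr hq).mul_right hqM
  exact ⟨u, Int.isCoprime_two_right.mp ⟨q, v * M, by linear_combination huv⟩,
    Int.modEq_iff_dvd.mpr ⟨v, by linear_combination -huv⟩⟩

theorem cos_set_equality_odd_case_general (p q : ℕ) (hp : 0 < p) (hq : 0 < q)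
    (hpodd : Odd p) (hqodd : Odd q)
    (n : ℤ) (hn : 0 < n) (hnodd : Odd n) (N : ℤ) (hN : N = p * q * n + 1) :
    {x : ℝ | ∃ k : ℤ, 0 < k ∧ k < N ∧ k % 2 = n % 2 ∧
        x = Real.cos ((p : ℝ) * q * k * π / (N : ℝ))} =
    {x : ℝ | ∃ k : ℤ, 0 < k ∧ k < N ∧ Odd k ∧
        x = Real.cos ((p : ℝ) * k * π / (N : ℝ))} := by
  have hNpos : 0 < N := by
    have : 0 < (p : ℤ) * q * n := by positivity
    omega
  have hNeven : Even N := by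
    rw [hN]; exact ((hpodd.natCast.mul hqodd.natCast).mul hnodd).add_one
  have hqN : IsCoprime (q : ℤ) N := ⟨-(p * n), 1, by rw [hN]; ring⟩
  obtain ⟨u, hu, hqu⟩ := Int.exists_odd_mul_modEq_one hqodd.natCast hqN
  ext x
  constructor
  · rintro ⟨k, hk0, hkN, hkn, rfl⟩
    have hk : Odd k := Int.odd_iff.mpr (hkn.trans (Int.odd_iff.mp hnodd))
    obtain ⟨j, hj0, hjN, hj, hcos⟩ := exists_odd_lt_cos_eq p hNpos hNeven (hqodd.natCast.mul hk)
    refine ⟨j, hj0, hjN, hj, ?_⟩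
    push_cast at hcos
    rw [← hcos, mul_assoc (p : ℝ)]
  · rintro ⟨j, hj0, hjN, hj, rfl⟩
    obtain ⟨k, hk0, hkN, hk, hcos⟩ := exists_odd_lt_cos_eq (p * q) hNpos hNeven (hu.mul hj)
    refine ⟨k, hk0, hkN, (Int.odd_iff.mp hk).trans (Int.odd_iff.mp hnodd).symm, ?_⟩
    have hpj : p * j ≡ p * q * (u * j) [ZMOD 2 * N] := by
      simpa [mul_assoc] using ((hqu.mul_left p).mul_right j).symm
    push_cast at hcos
    rw [← hcos]
    exact_mod_cast cos_intCast_mul_pi_div_eq_of_modEq hpj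

theorem cos_set_equality_odd_case (p q : ℕ) (hp : 0 < p) (hq : 0 < q)
    (hpodd : Odd p) (hqodd : Odd q) (hpq : Nat.Coprime p q)
    (n : ℤ) (hn : 0 < n) (hnodd : Odd n) (N : ℤ) (hN : N = p * q * n + 1) :
    {x : ℝ | ∃ k : ℤ, 0 < k ∧ k < N ∧ k % 2 = n % 2 ∧
        x = Real.cos ((p : ℝ) * q * k * π / (N : ℝ))} =
    {x : ℝ | ∃ k : ℤ, 0 < k ∧ k < N ∧ Odd k ∧
        x = Real.cos ((p : ℝ) * k * π / (N : ℝ))} :=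
  cos_set_equality_odd_case_general p q hp hq hpodd hqodd n hn hnodd N hN
end

section
/- Let p = 2p' with p' an even positive integer, q odd with gcd(p, q) = 1, n a positive integer, and N = 2p'qn + 1. Then N is odd, and the set {cos(2p'q·kπ/N) : k ∈ ℤ, 0 < k < N, k ≡ n mod 2} is equal to the set {cos(2p'·kπ/N) : k ∈ ℤ, 0 < k ≤ (N−1)/2}. -/
open Real

private lemma cos_key_aux {N : ℤ} (hN : (N:ℝ) ≠ 0) {a b : ℤ}
    (h : a % N = b % N ∨ a % N = (-b) % N) :
    Real.cos (2 * (a:ℝ) * π / N) = Real.cos (2 * (b:ℝ) * π / N) := by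
  have base : ∀ c d : ℤ, c % N = d % N →
      Real.cos (2 * (c:ℝ) * π / N) = Real.cos (2 * (d:ℝ) * π / N) := by
    intro c d hcd
    obtain ⟨t, ht⟩ := (Int.modEq_iff_dvd.mp hcd)
    have hz : d = c + N * t := by linarith
    have hr : (d:ℝ) = (c:ℝ) + (N:ℝ) * (t:ℝ) := by exact_mod_cast hz
    have harg : 2 * (d:ℝ) * π / N = 2 * (c:ℝ) * π / N + (t:ℝ) * (2 * π) := by
      rw [hr]; field_simp
    rw [harg, Real.cos_add_int_mul_two_pi]
  rcases h with h | h
  · exact base _ _ h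
  · rw [base _ _ h]
    have harg : 2 * ((-b : ℤ) : ℝ) * π / N = -(2 * (b:ℝ) * π / N) := by
      push_cast; ring
    rw [harg, Real.cos_neg]

theorem cos_set_equality_even_case (p' q : ℕ) (hp' : 0 < p') (hp'even : Even p')
    (hqodd : Odd q) (hpq : Nat.Coprime (2 * p') q) (n : ℤ) (hn : 0 < n)
    (N : ℤ) (hN : N = 2 * p' * q * n + 1) :
    Odd N ∧
    {x : ℝ | ∃ k : ℤ, 0 < k ∧ k < N ∧ k % 2 = n % 2 ∧
        x = Real.cos (2 * (p' : ℝ) * q * k * π / (N : ℝ))} =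
    {x : ℝ | ∃ k : ℤ, 0 < k ∧ k ≤ (N - 1) / 2 ∧
        x = Real.cos (2 * (p' : ℝ) * k * π / (N : ℝ))} := by
  have hq0 : 0 < q := by
    rcases hqodd with ⟨m, hm⟩; omega
  obtain ⟨X, hXpos, hNX⟩ : ∃ X : ℤ, 0 < X ∧ N = 2 * X + 1 := by
    refine ⟨(p':ℤ) * q * n, ?_, ?_⟩
    · apply mul_pos (mul_pos _ _) hn
      · exact_mod_cast hp'
      · exact_mod_cast hq0
    · rw [hN]; push_cast; ring
  have hNpos : 0 < N := by omega
  have hNR : (N:ℝ) ≠ 0 := Int.cast_ne_zero.mpr (by omega)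
  have hcop1 : IsCoprime ((p':ℤ) * q) N := ⟨-(2 * n), 1, by rw [hN]; push_cast; ring⟩
  have hcop2 : IsCoprime ((p':ℤ)) N := ⟨-(2 * q * n), 1, by rw [hN]; push_cast; ring⟩
  -- residues of a*k are nonzero
  have hmod_ne : ∀ a k : ℤ, IsCoprime a N → 0 < k → k < N → (a * k) % N ≠ 0 := by
    intro a k hc hk1 hk2 h0
    have hdvd : N ∣ a * k := Int.dvd_of_emod_eq_zero h0
    have hdk : N ∣ k := (hc.symm).dvd_of_dvd_mul_left hdvd
    have := Int.le_of_dvd hk1 hdk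
    omega
  -- solving a*k ≡ j (mod N)
  have hsolve : ∀ a : ℤ, IsCoprime a N → ∀ j : ℤ, 0 < j → j < N →
      ∃ k, 0 < k ∧ k < N ∧ ((a * k) % N = j % N) := by
    intro a hc j hj1 hj2
    obtain ⟨u, v, huv⟩ := hc
    have hcong : (a * ((u * j) % N)) % N = j % N := by
      have h1 : (a * ((u * j) % N)) % N = (a * (u * j)) % N := by
        rw [Int.mul_emod, Int.emod_emod_of_dvd _ dvd_rfl, ← Int.mul_emod]
      have h2 : (a * (u * j)) % N = j % N := by
        refine Int.modEq_iff_dvd.mpr ⟨v * j, ?_⟩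
        linear_combination (-j) * huv
      rw [h1, h2]
    have hjj : j % N = j := Int.emod_emod_of_dvd j dvd_rfl ▸ Int.emod_eq_of_lt (le_of_lt hj1) hj2
    have hne : (u * j) % N ≠ 0 := by
      intro h0
      rw [h0, mul_zero] at hcong
      simp [Int.zero_emod] at hcong
      omega
    have hnn : 0 ≤ (u * j) % N := Int.emod_nonneg _ (by omega)
    exact ⟨(u * j) % N, lt_of_le_of_ne hnn (Ne.symm hne), Int.emod_lt_of_pos _ hNpos, hcong⟩
  refine ⟨⟨X, by omega⟩, ?_⟩
  ext x
  simp only [Set.mem_setOf_eq]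
  have key : ∀ (c b : ℤ), (c % N = b % N ∨ c % N = (-b) % N) →
      Real.cos (2 * (c:ℝ) * π / N) = Real.cos (2 * (b:ℝ) * π / N) :=
    fun c b h => cos_key_aux hNR h
  constructor
  · rintro ⟨k, hk1, hk2, hkpar, rfl⟩
    set a : ℤ := (p':ℤ) * q with ha
    set m : ℤ := (a * k) % N with hm
    have hm1 : 0 < m := lt_of_le_of_ne (Int.emod_nonneg _ (by omega))
      (Ne.symm (hmod_ne a k hcop1 hk1 hk2))
    have hm2 : m < N := Int.emod_lt_of_pos _ hNpos
    obtain ⟨k0, hk01, hk02, hk0c⟩ := hsolve (p':ℤ) hcop2 m hm1 hm2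
    have hmm : m % N = m := Int.emod_eq_of_lt (le_of_lt hm1) hm2
    have hcosm : Real.cos (2 * (a * k : ℤ) * π / N) = Real.cos (2 * (m:ℝ) * π / N) :=
      key (a * k) m (Or.inl (by rw [hmm]))
    have e1 : 2 * (p':ℝ) * q * k * π / N = 2 * ((a * k : ℤ) : ℝ) * π / N := by
      push_cast [ha]; ring
    by_cases hcase : k0 ≤ (N - 1) / 2
    · refine ⟨k0, hk01, hcase, ?_⟩
      rw [e1, hcosm]
      have e2 : 2 * (p':ℝ) * k0 * π / N = 2 * (((p':ℤ) * k0 : ℤ) : ℝ) * π / N := by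
        push_cast; ring
      rw [e2]
      exact (key ((p':ℤ) * k0) m (Or.inl (by rw [hk0c, hmm]))).symm
    · refine ⟨N - k0, by omega, by omega, ?_⟩
      rw [e1, hcosm]
      have e2 : 2 * (p':ℝ) * (N - k0 : ℤ) * π / N = 2 * (((p':ℤ) * (N - k0) : ℤ) : ℝ) * π / N := by
        push_cast; ring
      rw [e2]
      refine (key ((p':ℤ) * (N - k0)) m ?_).symm
      right
      have h1 : ((p':ℤ) * (N - k0)) % N = (-(((p':ℤ)) * k0)) % N :=
        Int.modEq_iff_dvd.mpr ⟨-(p':ℤ), by ring⟩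
      have h2 : (-(((p':ℤ)) * k0)) % N = (-m) % N := Int.ModEq.neg (by rw [Int.ModEq, hk0c, hmm])
      rw [h1, h2]
  · rintro ⟨k, hk1, hk2, rfl⟩
    have hk2' : k < N := by omega
    set b : ℤ := (p':ℤ) with hb
    set m : ℤ := (b * k) % N with hm
    have hm1 : 0 < m := lt_of_le_of_ne (Int.emod_nonneg _ (by omega))
      (Ne.symm (hmod_ne b k hcop2 hk1 hk2'))
    have hm2 : m < N := Int.emod_lt_of_pos _ hNpos
    obtain ⟨k0, hk01, hk02, hk0c⟩ := hsolve ((p':ℤ) * q) hcop1 m hm1 hm2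
    have hmm : m % N = m := Int.emod_eq_of_lt (le_of_lt hm1) hm2
    have hcosm : Real.cos (2 * (b * k : ℤ) * π / N) = Real.cos (2 * (m:ℝ) * π / N) :=
      key (b * k) m (Or.inl (by rw [hmm]))
    have e1 : 2 * (p':ℝ) * k * π / N = 2 * ((b * k : ℤ) : ℝ) * π / N := by
      push_cast [hb]; ring
    by_cases hcase : k0 % 2 = n % 2
    · refine ⟨k0, hk01, hk02, hcase, ?_⟩
      rw [e1, hcosm]
      have e2 : 2 * (p':ℝ) * q * k0 * π / N = 2 * (((p':ℤ) * q * k0 : ℤ) : ℝ) * π / N := by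
        push_cast; ring
      rw [e2]
      exact (key ((p':ℤ) * q * k0) m (Or.inl (by rw [hk0c, hmm]))).symm
    · refine ⟨N - k0, by omega, by omega, by omega, ?_⟩
      rw [e1, hcosm]
      have e2 : 2 * (p':ℝ) * q * (N - k0 : ℤ) * π / N
          = 2 * (((p':ℤ) * q * (N - k0) : ℤ) : ℝ) * π / N := by
        push_cast; ring
      rw [e2]
      refine (key ((p':ℤ) * q * (N - k0)) m ?_).symm
      right
      have h1 : ((p':ℤ) * q * (N - k0)) % N = (-(((p':ℤ) * q) * k0)) % N :=
        Int.modEq_iff_dvd.mpr ⟨-((p':ℤ) * q), by ring⟩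
      have h2 : (-(((p':ℤ) * q) * k0)) % N = (-m) % N := Int.ModEq.neg (by rw [Int.ModEq, hk0c, hmm])
      rw [h1, h2]
end
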